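/- arXiv:0809.4412 — 6 statements merged into one kernel-verified Lean document; each statement's English description precedes it below -/
import Mathlib

section
/- Let q be a prime power and d ≥ 1. The number of self-reciprocal polynomials f ∈ F_q[t] of degree d with f(0) = 1 equals: 2·q^((d-1)/2) if q and d are both odd; q^((d-1)/2) if q is even and d is odd; (q+1)·q^(d/2 - 1) if q is odd and d is even; and q^(d/2) if q and d are both even. -/
open Polynomial

section Aux

open scoped Classical

variable {F : Type*} [Field F]

private noncomputable def cfun (ε : F) (d : ℕ) (A : ℕ → F) (i : ℕ) : F :=
  if 2 * i ≤ d then (if i = 0 then 1 else A i) else ε * (if i = d then 1 else A (d - i))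

private noncomputable def mkP (ε : F) (d : ℕ) (A : ℕ → F) : Polynomial F :=
  ∑ i ∈ Finset.range (d + 1), Polynomial.monomial i (cfun ε d A i)

private lemma coeff_mkP (ε : F) (d : ℕ) (A : ℕ → F) (n : ℕ) :
    (mkP ε d A).coeff n = if n ≤ d then cfun ε d A n else 0 := by
  simp [mkP, Polynomial.coeff_monomial, Nat.lt_succ_iff]

private lemma cfun_symm (ε : F) (hε2 : ε * ε = 1) (d : ℕ) (hd : 1 ≤ d) (A : ℕ → F)
    (hmid : 2 * (d / 2) = d → ε * A (d / 2) = A (d / 2)) {n : ℕ} (hn : n ≤ d) :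
    cfun ε d A (d - n) = ε * cfun ε d A n := by
  simp only [cfun]
  rcases lt_trichotomy (2 * n) d with h | h | h
  · rw [if_neg (show ¬ 2 * (d - n) ≤ d by omega), if_pos (show 2 * n ≤ d by omega)]
    by_cases h0 : n = 0
    · rw [if_pos (show d - n = d by omega), if_pos h0]
    · rw [if_neg (show ¬ d - n = d by omega), if_neg h0, show d - (d - n) = n by omega]
  · rw [if_pos (show 2 * (d - n) ≤ d by omega), if_pos (show 2 * n ≤ d by omega),
      if_neg (show ¬ d - n = 0 by omega), if_neg (show ¬ n = 0 by omega),
      show d - n = n by omega, show n = d / 2 by omega]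
    exact (hmid (by omega)).symm
  · rw [if_pos (show 2 * (d - n) ≤ d by omega), if_neg (show ¬ 2 * n ≤ d by omega)]
    by_cases h0 : n = d
    · rw [if_pos (show d - n = 0 by omega), if_pos h0, mul_one, hε2]
    · rw [if_neg (show ¬ d - n = 0 by omega), if_neg h0, ← mul_assoc, hε2, one_mul]

private lemma key [Fintype F] (ε : F) (hε : ε = 1 ∨ ε = -1) (d m : ℕ) (hd : 1 ≤ d)
    (hm : m = if 2 * (d / 2) = d ∧ ε ≠ 1 then d / 2 - 1 else d / 2) :
    ∃ φ : (Fin m → F) → Polynomial F,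
      Set.BijOn φ Set.univ
        {f : Polynomial F | f.natDegree = d ∧ f.coeff 0 = 1 ∧ f.reverse = ε • f} := by
  have hε2 : ε * ε = 1 := by rcases hε with h | h <;> rw [h] <;> ring
  have hε0 : ε ≠ 0 := by rcases hε with h | h <;> rw [h] <;> simp
  have hmle : m ≤ d / 2 := by rw [hm]; split <;> omega
  set lift : (Fin m → F) → ℕ → F :=
    fun a i => if h : i - 1 < m then a ⟨i - 1, h⟩ else 0 with hlift
  have hval : ∀ (a : Fin m → F) (j : Fin m),
      (mkP ε d (lift a)).coeff ((j : ℕ) + 1) = a j := by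
    intro a j
    have hj : (j : ℕ) + 1 ≤ d / 2 := by have := j.2; omega
    rw [coeff_mkP, if_pos (show (j : ℕ) + 1 ≤ d by omega), cfun,
      if_pos (show 2 * ((j : ℕ) + 1) ≤ d by omega),
      if_neg (show ¬ ((j : ℕ) + 1 = 0) by omega)]
    simp only [hlift, Nat.add_sub_cancel]
    rw [dif_pos j.2]
  refine ⟨fun a => mkP ε d (lift a), ?_, ?_, ?_⟩
  · rintro a -
    have hcoeff := coeff_mkP ε d (lift a)
    have hdeg : (mkP ε d (lift a)).natDegree = d := by
      apply le_antisymm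
      · rw [Polynomial.natDegree_le_iff_coeff_eq_zero]
        intro n hn
        rw [hcoeff, if_neg (by omega)]
      · apply Polynomial.le_natDegree_of_ne_zero
        rw [hcoeff, if_pos le_rfl, cfun, if_neg (show ¬ 2 * d ≤ d by omega), if_pos rfl,
          mul_one]
        exact hε0
    have hmid : 2 * (d / 2) = d → ε * (lift a) (d / 2) = (lift a) (d / 2) := by
      intro hdd
      by_cases h1 : ε = 1
      · rw [h1, one_mul]
      · have hm' : m = d / 2 - 1 := by rw [hm, if_pos ⟨hdd, h1⟩]
        have h2 : ¬ (d / 2 - 1 < m) := by omega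
        simp only [hlift]
        rw [dif_neg h2, mul_zero]
    refine ⟨hdeg, ?_, ?_⟩
    · rw [hcoeff, if_pos (show 0 ≤ d by omega), cfun, if_pos (show 2 * 0 ≤ d by omega),
        if_pos rfl]
    · ext n
      rw [Polynomial.coeff_reverse, hdeg, Polynomial.coeff_smul, smul_eq_mul]
      by_cases hn : n ≤ d
      · rw [Polynomial.revAt_le hn, hcoeff, hcoeff,
          if_pos (show d - n ≤ d by omega), if_pos hn]
        exact cfun_symm ε hε2 d hd (lift a) hmid hn
      · rw [Polynomial.revAt_eq_self_of_lt (by omega), hcoeff, if_neg hn, mul_zero]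
  · rintro a - b - hab
    funext j
    have h1 := congrArg (fun p => Polynomial.coeff p ((j : ℕ) + 1)) hab
    simp only at h1
    rw [hval a j, hval b j] at h1
    exact h1
  · rintro f ⟨hfd, hf0, hfr⟩
    have hsym : ∀ i ≤ d, f.coeff (d - i) = ε * f.coeff i := by
      intro i hi
      have h := congrArg (fun p => Polynomial.coeff p i) hfr
      simp only [Polynomial.coeff_smul, smul_eq_mul] at h
      rwa [Polynomial.coeff_reverse, hfd, Polynomial.revAt_le hi] at h
    refine ⟨fun j => f.coeff ((j : ℕ) + 1), Set.mem_univ _, ?_⟩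
    ext n
    rw [coeff_mkP]
    by_cases hn : n ≤ d
    · rw [if_pos hn, cfun]
      by_cases h1 : 2 * n ≤ d
      · rw [if_pos h1]
        by_cases h0 : n = 0
        · rw [if_pos h0, h0, hf0]
        · rw [if_neg h0]
          by_cases h2 : n - 1 < m
          · simp only [hlift]
            rw [dif_pos h2]
            congr 1
            omega
          · simp only [hlift]
            rw [dif_neg h2]
            have hdd : 2 * (d / 2) = d ∧ ε ≠ 1 := by
              by_contra hc
              rw [if_neg hc] at hm
              omega
            have hnd : n = d / 2 := by
              rw [if_pos hdd] at hm
              omega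
            have hε' : ε = -1 := by
              rcases hε with h | h
              · exact absurd h hdd.2
              · exact h
            have h2F : (2 : F) ≠ 0 := by
              intro hc
              apply hdd.2
              rw [hε']
              linear_combination -hc
            have h3 := hsym n hn
            rw [show d - n = n by omega, hε'] at h3
            have h5 : (2 : F) * f.coeff n = 0 := by linear_combination h3
            rcases mul_eq_zero.mp h5 with h | h
            · exact absurd h h2F
            · rw [h]
      · rw [if_neg h1]
        by_cases h0 : n = d
        · rw [if_pos h0, mul_one, h0]
          have h3 := hsym d le_rfl
          rw [Nat.sub_self, hf0] at h3
          linear_combination ε * h3 + f.coeff d * hε2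
        · rw [if_neg h0]
          have hidx : d - n - 1 < m := by
            rw [hm]; split <;> omega
          simp only [hlift]
          rw [dif_pos hidx]
          have h4 : d - n - 1 + 1 = d - n := by omega
          rw [h4, hsym n hn, ← mul_assoc, hε2, one_mul]
    · rw [if_neg hn]
      exact (Polynomial.coeff_eq_zero_of_natDegree_lt (by omega)).symm

private lemma ncard_S [Fintype F] (ε : F) (hε : ε = 1 ∨ ε = -1) (d m : ℕ) (hd : 1 ≤ d)
    (hm : m = if 2 * (d / 2) = d ∧ ε ≠ 1 then d / 2 - 1 else d / 2) :
    ({f : Polynomial F | f.natDegree = d ∧ f.coeff 0 = 1 ∧ f.reverse = ε • f}).Finite ∧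
    ({f : Polynomial F | f.natDegree = d ∧ f.coeff 0 = 1 ∧ f.reverse = ε • f}).ncard
      = Fintype.card F ^ m := by
  obtain ⟨φ, hφ⟩ := key ε hε d m hd hm
  have himg := hφ.image_eq
  constructor
  · rw [← himg]; exact Set.finite_univ.image φ
  · rw [← himg, Set.ncard_image_of_injOn hφ.injOn, Set.ncard_univ]
    simp [Nat.card_eq_fintype_card]

private lemma odd_card_iff [Fintype F] : Odd (Fintype.card F) ↔ (2 : F) ≠ 0 := by
  obtain ⟨n, hp, hcard⟩ := FiniteField.card F (ringChar F)
  rw [hcard]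
  constructor
  · intro h h2
    have hdvd : ringChar F ∣ 2 :=
      (CharP.cast_eq_zero_iff F (ringChar F) 2).mp (by exact_mod_cast h2)
    have heq : ringChar F = 2 := (Nat.prime_dvd_prime_iff_eq hp Nat.prime_two).mp hdvd
    rw [heq, Nat.odd_iff] at h
    have hev : Even (2 ^ (n : ℕ)) := Nat.even_pow.mpr ⟨even_two, n.pos.ne'⟩
    rw [Nat.even_iff] at hev
    omega
  · intro h2
    have hne : ringChar F ≠ 2 := by
      intro hc
      apply h2
      have hc0 := CharP.cast_eq_zero F (ringChar F)
      rw [hc] at hc0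
      exact_mod_cast hc0
    exact (hp.odd_of_ne_two hne).pow

end Aux

theorem stmt_2 {F : Type*} [Field F] [Fintype F] (q d : ℕ) (hq : q = Fintype.card F)
    (hd : 1 ≤ d) :
    Set.ncard {f : Polynomial F |
        f.natDegree = d ∧ f.coeff 0 = 1 ∧ (f.reverse = f ∨ f.reverse = -f)} =
      if Odd d then (if Odd q then 2 * q ^ ((d - 1) / 2) else q ^ ((d - 1) / 2))
      else (if Odd q then (q + 1) * q ^ (d / 2 - 1) else q ^ (d / 2)) := by
  classical
  subst hq
  have hset : {f : Polynomial F |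
        f.natDegree = d ∧ f.coeff 0 = 1 ∧ (f.reverse = f ∨ f.reverse = -f)}
      = {f : Polynomial F | f.natDegree = d ∧ f.coeff 0 = 1 ∧ f.reverse = (1 : F) • f}
      ∪ {f : Polynomial F | f.natDegree = d ∧ f.coeff 0 = 1 ∧ f.reverse = (-1 : F) • f} := by
    ext f
    simp only [Set.mem_setOf_eq, Set.mem_union, one_smul, neg_one_smul]
    tauto
  rw [hset]
  obtain ⟨hfin1, hcard1⟩ := ncard_S (F := F) 1 (Or.inl rfl) d (d / 2) hd
    (by rw [if_neg]; simp)
  by_cases hq2 : (2 : F) = 0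
  · have hq' : ¬ Odd (Fintype.card F) := fun h => (odd_card_iff.mp h) hq2
    have hmm : (-1 : F) = 1 := by linear_combination -hq2
    rw [hmm, Set.union_self, hcard1]
    by_cases hdo : Odd d
    · rw [if_pos hdo, if_neg hq']
      rw [Nat.odd_iff] at hdo
      congr 1
      omega
    · rw [if_neg hdo, if_neg hq']
  · have hqodd : Odd (Fintype.card F) := odd_card_iff.mpr hq2
    have hne : (-1 : F) ≠ 1 := fun h => hq2 (by linear_combination -h)
    obtain ⟨hfin2, hcard2⟩ := ncard_S (F := F) (-1) (Or.inr rfl) d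
      (if 2 * (d / 2) = d then d / 2 - 1 else d / 2) hd
      (by by_cases h : 2 * (d / 2) = d
          · rw [if_pos h, if_pos ⟨h, hne⟩]
          · rw [if_neg h, if_neg (by tauto)])
    have hdisj : Disjoint
        {f : Polynomial F | f.natDegree = d ∧ f.coeff 0 = 1 ∧ f.reverse = (1 : F) • f}
        {f : Polynomial F | f.natDegree = d ∧ f.coeff 0 = 1 ∧ f.reverse = (-1 : F) • f} := by
      rw [Set.disjoint_left]
      rintro f ⟨_, hf0, hr1⟩ ⟨_, _, hr2⟩
      rw [hr1] at hr2
      have hco := congrArg (fun p => Polynomial.coeff p 0) hr2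
      simp only [Polynomial.coeff_smul, smul_eq_mul, hf0, one_mul, mul_one] at hco
      exact hne (by linear_combination -hco)
    rw [Set.ncard_union_eq hdisj hfin1 hfin2, hcard1, hcard2]
    by_cases hdo : Odd d
    · rw [if_pos hdo]
      rw [Nat.odd_iff] at hdo
      rw [if_neg (show ¬ 2 * (d / 2) = d by omega), if_pos hqodd,
        show (d - 1) / 2 = d / 2 by omega]
      ring
    · rw [if_neg hdo]
      rw [Nat.not_odd_iff] at hdo
      rw [if_pos (show 2 * (d / 2) = d by omega), if_pos hqodd]
      have h2 : Fintype.card F ^ (d / 2) =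
          Fintype.card F * Fintype.card F ^ (d / 2 - 1) := by
        rw [← pow_succ']
        congr 1
        omega
      rw [h2]
      ring
end

section
/- Let q be even and g be a real element of GL_n(q). Then g is real in SL_n(q); i.e., some h ∈ SL_n(q) satisfies hgh⁻¹ = g⁻¹. (Indeed g lies in SL_n(q) since its determinant is ±1 = 1.) -/
theorem stmt_9 {F : Type*} [Field F] [Fintype F] (h2 : Even (Fintype.card F))
    (n : ℕ) (g : GL (Fin n) F)
    (hreal : ∃ h : GL (Fin n) F, h * g * h⁻¹ = g⁻¹) :
    (g : Matrix (Fin n) (Fin n) F).det = 1 ∧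
      ∃ h : GL (Fin n) F, (h : Matrix (Fin n) (Fin n) F).det = 1 ∧ h * g * h⁻¹ = g⁻¹ := by
  classical
  obtain ⟨h₀, hh₀⟩ := hreal
  have hchar : ringChar F = 2 :=
    FiniteField.even_card_iff_char_two.mpr (Nat.even_iff.mp h2)
  have h2z : (2 : F) = 0 := by
    haveI := ringChar.eq_iff.mp hchar
    have h : ((2 : ℕ) : F) = 0 := CharP.cast_eq_zero F 2
    exact_mod_cast h
  have sq_one : ∀ x : F, x ^ 2 = 1 → x = 1 := by
    intro x hx
    have e : (x - 1) ^ 2 = 0 := by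
      have h : (x - 1) ^ 2 = 2 * (1 - x) + (x ^ 2 - 1) := by ring
      rw [h, hx, h2z]; ring
    have h := pow_eq_zero_iff (n := 2) (by norm_num) |>.mp e
    exact sub_eq_zero.mp h
  set D := Matrix.GeneralLinearGroup.det (n := Fin n) (R := F) with hD
  have hinv : D g = (D g)⁻¹ := by
    have h := congrArg D hh₀
    simp only [map_mul, map_inv] at h
    rw [mul_comm (D h₀) (D g), mul_assoc] at h
    simpa using h
  have hdg : D g = 1 := by
    have hsq : D g ^ 2 = 1 := by
      nth_rewrite 1 [sq, hinv]
      simp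
    have hv : ((D g : Fˣ) : F) ^ 2 = 1 := by
      have h := congrArg Units.val hsq
      simpa using h
    ext
    exact sq_one _ hv
  have hdg' : (g : Matrix (Fin n) (Fin n) F).det = 1 := by
    have h := congrArg Units.val hdg
    simpa [hD, Matrix.GeneralLinearGroup.val_det_apply] using h
  refine ⟨hdg', ?_⟩
  set m := Fintype.card Fˣ with hm
  have hmodd : Odd m := by
    rw [hm, Fintype.card_units]
    exact Nat.Even.sub_odd Fintype.card_pos h2 odd_one
  obtain ⟨t, ht⟩ := hmodd
  have h1 : h₀ * g = g⁻¹ * h₀ := by rw [← hh₀]; group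
  have h2' : h₀ * g⁻¹ * h₀⁻¹ = g := by
    have h := congrArg Inv.inv hh₀
    simp only [mul_inv_rev, inv_inv] at h
    rw [mul_assoc]; exact h
  have hc : Commute (h₀ ^ 2) g := by
    show h₀ ^ 2 * g = g * h₀ ^ 2
    calc h₀ ^ 2 * g = h₀ * (h₀ * g) := by rw [sq, mul_assoc]
      _ = h₀ * (g⁻¹ * h₀) := by rw [h1]
      _ = (h₀ * g⁻¹ * h₀⁻¹) * h₀ * h₀ := by group
      _ = g * h₀ ^ 2 := by rw [h2', sq, mul_assoc]
  have hpow : h₀ ^ m = (h₀ ^ 2) ^ t * h₀ := by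
    rw [ht, pow_succ, pow_mul]
  have hcomm : Commute ((h₀ ^ 2) ^ t) g⁻¹ := (hc.pow_left t).inv_right
  have hrev : h₀ ^ m * g * (h₀ ^ m)⁻¹ = g⁻¹ := by
    rw [hpow]
    calc (h₀ ^ 2) ^ t * h₀ * g * ((h₀ ^ 2) ^ t * h₀)⁻¹
        = (h₀ ^ 2) ^ t * (h₀ * g * h₀⁻¹) * ((h₀ ^ 2) ^ t)⁻¹ := by group
      _ = (h₀ ^ 2) ^ t * g⁻¹ * ((h₀ ^ 2) ^ t)⁻¹ := by rw [hh₀]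
      _ = g⁻¹ := by rw [hcomm.eq]; group
  refine ⟨h₀ ^ m, ?_, hrev⟩
  have hdh : D (h₀ ^ m) = 1 := by
    rw [hm, map_pow]; exact pow_card_eq_one
  have h := congrArg Units.val hdh
  simpa [hD, Matrix.GeneralLinearGroup.val_det_apply] using h
end

section
/- Let q be odd and let g ∈ GL_2m(q) act cyclically on V = F_q^{2m} with self-reciprocal characteristic polynomial χ(t) = t^{2m} + a₁t^{2m-1} + ... + a₁t + 1. Then there exists an involution h ∈ GL_2m(q) with h·g·h⁻¹ = g⁻¹ and det h = (-1)^m. -/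
/-!
Let `v, gv, …, g^(n-1)v` (`n = 2m`) be the cyclic basis and let `h` reverse it:
`h (g^i v) = g^(n-1-i) v`. Then `h` is an involution, its determinant is the sign of the reversal
of `Fin (2m)`, a product of `m` disjoint transpositions, and `g h g = h` holds on `g^i v` for
`i < n - 1` by direct computation. On the last basis vector it follows from the relation
`χ(g) v = 0`: since `χ` is palindromic, the image of this relation under `g h` is again the
relation `χ(g) v = 0`, read backwards.
-/

open Equiv Matrix Module Polynomial

theorem Fin.sign_revPerm_two_mul (m : ℕ) :
    Perm.sign (Fin.revPerm : Perm (Fin (2 * m))) = (-1) ^ m := by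
  have hinv : (Fin.revPerm : Perm (Fin (2 * m))) ^ 2 = 1 := by
    ext i
    simp [sq]
  have hfix : Fintype.card (Function.fixedPoints (Fin.revPerm : Perm (Fin (2 * m)))) = 0 := by
    refine Fintype.card_eq_zero_iff.mpr ⟨fun ⟨i, hi⟩ => ?_⟩
    simp only [Function.mem_fixedPoints, Function.IsFixedPt, Fin.revPerm_apply, Fin.ext_iff,
      Fin.val_rev] at hi
    omega
  rw [Perm.sign_of_pow_two_eq_one hinv, hfix, Fintype.card_fin]
  simp

theorem Module.Basis.det_equiv_self {R M ι : Type*} [CommRing R] [AddCommGroup M] [Module R M]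
    [Fintype ι] [DecidableEq ι] (b : Basis ι R M) (σ : Perm ι) :
    LinearMap.det (b.equiv b σ : M →ₗ[R] M) = Perm.sign σ := by
  have : LinearMap.toMatrix b b (b.equiv b σ) = σ⁻¹.permMatrix R := by
    ext i j
    simp [LinearMap.toMatrix_apply, Finsupp.single_apply, Equiv.eq_symm_apply, eq_comm]
  rw [← LinearMap.det_toMatrix b, this, Matrix.det_permutation, Perm.sign_inv]

theorem mul_mul_inv_eq_inv_iff_mul_mul_eq {G : Type*} [Group G] {g h : G} :
    h * g * h⁻¹ = g⁻¹ ↔ g * h * g = h := by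
  rw [mul_inv_eq_iff_eq_mul, eq_inv_mul_iff_mul_eq, mul_assoc]

section Cyclic

variable {R V : Type*} [CommRing R] [AddCommGroup V] [Module R V] {f : Module.End R V} {p : R[X]}

theorem Polynomial.sum_coeff_smul_pow_apply_eq_zero (hf : aeval f p = 0) (v : V) :
    ∑ k ∈ Finset.range (p.natDegree + 1), p.coeff k • (f ^ k) v = 0 := by
  simpa [aeval_eq_sum_range, LinearMap.sum_apply] using congr($hf v)

theorem Polynomial.sum_coeff_smul_pow_natDegree_sub_apply_eq_zero (hrev : p.reverse = p)
    (hf : aeval f p = 0) (v : V) :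
    ∑ k ∈ Finset.range (p.natDegree + 1), p.coeff k • (f ^ (p.natDegree - k)) v = 0 := by
  have hcoeff : ∀ k ∈ Finset.range (p.natDegree + 1), p.coeff k = p.coeff (p.natDegree - k) := by
    intro k hk
    conv_lhs => rw [← hrev]
    rw [coeff_reverse, revAt_le (Finset.mem_range_succ_iff.mp hk)]
  rw [Finset.sum_congr rfl fun k hk => by rw [hcoeff k hk]]
  simpa only [Nat.add_sub_cancel] using
    (Finset.sum_range_reflect (fun k => p.coeff k • (f ^ k) v) (p.natDegree + 1)).trans
      (sum_coeff_smul_pow_apply_eq_zero hf v)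

variable {n : ℕ} {v : V} {b : Basis (Fin n) R V}

theorem apply_equiv_revPerm_pow_apply (hb : ∀ i, b i = (f ^ (i : ℕ)) v) (hp : p.Monic)
    (hdeg : p.natDegree = n) (hrev : p.reverse = p) (hf : aeval f p = 0) {k : ℕ} (hk : k ≤ n) :
    f (b.equiv b Fin.revPerm ((f ^ k) v)) = (f ^ (n - k)) v := by
  have hlt : ∀ j < n, f (b.equiv b Fin.revPerm ((f ^ j) v)) = (f ^ (n - j)) v := by
    intro j hj
    rw [← hb ⟨j, hj⟩, Basis.equiv_apply, hb, ← End.mul_apply, ← pow_succ']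
    congr 2
    simp only [Fin.revPerm_apply, Fin.val_rev]
    omega
  rcases hk.lt_or_eq with hk | rfl
  · exact hlt k hk
  subst hdeg
  have hrel := congr(f (b.equiv b Fin.revPerm $(sum_coeff_smul_pow_apply_eq_zero hf v)))
  have hrefl := sum_coeff_smul_pow_natDegree_sub_apply_eq_zero hrev hf v
  rw [Finset.sum_range_succ, map_add, map_add, map_sum, map_sum, hp.coeff_natDegree, one_smul,
    map_zero, map_zero,
    Finset.sum_congr rfl fun k hk => by rw [map_smul, map_smul, hlt k (Finset.mem_range.mp hk)]]
    at hrel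
  rw [Finset.sum_range_succ, hp.coeff_natDegree, one_smul] at hrefl
  exact add_left_cancel (hrel.trans hrefl.symm)

theorem mul_equiv_revPerm_mul_eq (hb : ∀ i, b i = (f ^ (i : ℕ)) v) (hp : p.Monic)
    (hdeg : p.natDegree = n) (hrev : p.reverse = p) (hf : aeval f p = 0) :
    f * (b.equiv b Fin.revPerm : End R V) * f = b.equiv b Fin.revPerm := by
  refine b.ext fun i => ?_
  change f (b.equiv b Fin.revPerm (f (b i))) = b.equiv b Fin.revPerm (b i)
  rw [Basis.equiv_apply, hb, hb, ← End.mul_apply, ← pow_succ',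
    apply_equiv_revPerm_pow_apply hb hp hdeg hrev hf (by omega), Fin.revPerm_apply, Fin.val_rev]

end Cyclic

theorem Matrix.exists_mul_self_eq_one_and_mul_mul_eq_of_cyclic {K : Type*} [Field K] {n : ℕ}
    (A : Matrix (Fin n) (Fin n) K) {v : Fin n → K}
    (hv : LinearIndependent K fun i : Fin n => (A ^ (i : ℕ)) *ᵥ v)
    (hrev : A.charpoly.reverse = A.charpoly) :
    ∃ H : Matrix (Fin n) (Fin n) K, H * H = 1 ∧ A * H * A = H ∧
      H.det = Perm.sign (Fin.revPerm : Perm (Fin n)) := by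
  let b := basisOfLinearIndependentOfCardEqFinrank' _ hv (by simp)
  have hb : ∀ i, b i = (toLin' A ^ (i : ℕ)) v := fun i => by
    simp [b, ← Matrix.toLin'_pow]
  let φ : End K (Fin n → K) := b.equiv b Fin.revPerm
  have hf : aeval (toLin' A) A.charpoly = 0 := by
    simpa [Matrix.charpoly_toLin'] using LinearMap.aeval_self_charpoly (toLin' A)
  have hφφ : φ * φ = 1 := by
    refine b.ext fun i => ?_
    simp [φ]
  refine ⟨LinearMap.toMatrix' φ, ?_, ?_, ?_⟩
  · rw [← LinearMap.toMatrix'_mul, hφφ, LinearMap.toMatrix'_one]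
  · rw [← LinearMap.toMatrix'_toLin' A, ← LinearMap.toMatrix'_mul, ← LinearMap.toMatrix'_mul,
      mul_equiv_revPerm_mul_eq hb A.charpoly_monic (by simp) hrev hf]
  · rw [LinearMap.det_toMatrix', b.det_equiv_self]

theorem stmt_10_general {F : Type*} [Field F]
    (m : ℕ) (g : GL (Fin (2 * m)) F)
    (hcyc : ∃ v : Fin (2 * m) → F,
      LinearIndependent F (fun i : Fin (2 * m) =>
        (((g : Matrix (Fin (2 * m)) (Fin (2 * m)) F)) ^ (i : ℕ)).mulVec v))
    (hsr : (Matrix.charpoly (g : Matrix (Fin (2 * m)) (Fin (2 * m)) F)).reverse =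
      Matrix.charpoly (g : Matrix (Fin (2 * m)) (Fin (2 * m)) F)) :
    ∃ h : GL (Fin (2 * m)) F, h ^ 2 = 1 ∧ h * g * h⁻¹ = g⁻¹ ∧
      (h : Matrix (Fin (2 * m)) (Fin (2 * m)) F).det = (-1 : F) ^ m := by
  obtain ⟨v, hv⟩ := hcyc
  obtain ⟨H, hHH, hgHg, hdet⟩ :=
    Matrix.exists_mul_self_eq_one_and_mul_mul_eq_of_cyclic _ hv hsr
  let h : GL (Fin (2 * m)) F := ⟨H, H, hHH, hHH⟩
  have hsq : h ^ 2 = 1 := Units.ext (by simp [h, sq, hHH])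
  have hconj : h * g * h⁻¹ = g⁻¹ :=
    mul_mul_inv_eq_inv_iff_mul_mul_eq.mpr (Units.ext (by simpa [h] using hgHg))
  refine ⟨h, hsq, hconj, ?_⟩
  rw [show (h : Matrix _ _ F) = H from rfl, hdet, Fin.sign_revPerm_two_mul]
  simp

theorem stmt_10 {F : Type*} [Field F] [Fintype F] (hq : Odd (Fintype.card F))
    (m : ℕ) (g : GL (Fin (2 * m)) F)
    (hcyc : ∃ v : Fin (2 * m) → F,
      LinearIndependent F (fun i : Fin (2 * m) =>
        (((g : Matrix (Fin (2 * m)) (Fin (2 * m)) F)) ^ (i : ℕ)).mulVec v))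
    (hsr : (Matrix.charpoly (g : Matrix (Fin (2 * m)) (Fin (2 * m)) F)).reverse =
      Matrix.charpoly (g : Matrix (Fin (2 * m)) (Fin (2 * m)) F)) :
    ∃ h : GL (Fin (2 * m)) F, h ^ 2 = 1 ∧ h * g * h⁻¹ = g⁻¹ ∧
      (h : Matrix (Fin (2 * m)) (Fin (2 * m)) F).det = (-1 : F) ^ m :=
  stmt_10_general m g hcyc hsr
end

section
/- Let q be odd and let g ∈ GL_{2m+1}(q) act cyclically on F_q^{2m+1} with characteristic polynomial (t - ε)^{2m+1}, where ε = ±1. Then there exist involutions h, h' ∈ GL_{2m+1}(q) with hgh⁻¹ = g⁻¹ = h'g(h')⁻¹ and det h = (-1)^m, det h' = (-1)^{m+1}; in particular g is reversed both by an involution of determinant 1 and by one of determinant -1. -/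
/-!
Let `b_i = gⁱ v` (`0 ≤ i ≤ n`, `n = 2m`) be the cyclic basis and let `h` be the involution
`b_i ↦ b_{n-i}`. Then `g h g = h` holds on `b_0, …, b_{n-1}` by shifting indices, and on `b_n`
it amounts to the reversed characteristic polynomial `tⁿ⁺¹ χ(1/t)` annihilating `g`. For
`χ = (t - ε)ⁿ⁺¹` with `ε² = 1` this reversal is `(-ε)ⁿ⁺¹ χ`, so Cayley–Hamilton applies. Hence
`h g h⁻¹ = g⁻¹`, and `det h` is the sign `(-1)^m` of the reversal of `n + 1 = 2m + 1` indices;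
`-h` is a second reversing involution, of determinant `(-1)^(m+1)`.
-/

open Equiv Equiv.Perm Polynomial Finset Matrix

theorem mul_mul_inv_eq_inv_of_sq_eq_one {G : Type*} [Group G] {g h : G} (hh : h ^ 2 = 1)
    (hghg : g * h * g = h) : h * g * h⁻¹ = g⁻¹ := by
  rw [inv_eq_of_mul_eq_one_right (sq h ▸ hh), eq_inv_iff_mul_eq_one,
    show h * g * h * g = h * (g * h * g) by group, hghg, ← sq, hh]

theorem Fin.revPerm_succ_eq_decomposeFin_mul_finRotate (n : ℕ) :
    (Fin.revPerm : Perm (Fin (n + 1))) =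
      decomposeFin.symm (0, Fin.revPerm) * finRotate (n + 1) := by
  ext j
  refine Fin.lastCases ?_ (fun i => ?_) j
  · simp [decomposeFin_symm_apply_zero]
  · simp [decomposeFin_symm_apply_succ, Fin.rev_castSucc]

theorem Fin.sign_revPerm (n : ℕ) : sign (Fin.revPerm : Perm (Fin n)) = (-1) ^ n.choose 2 := by
  induction n with
  | zero => rfl
  | succ n ih =>
    rw [Fin.revPerm_succ_eq_decomposeFin_mul_finRotate, Perm.sign_mul, decomposeFin.symm_sign, ih,
      sign_finRotate, Nat.choose_succ_succ, Nat.choose_one_right]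
    simp [pow_add, mul_comm]

theorem Fin.sign_revPerm_two_mul_add_one (m : ℕ) :
    sign (Fin.revPerm : Perm (Fin (2 * m + 1))) = (-1) ^ m := by
  rw [Fin.sign_revPerm, Nat.choose_two_right, Nat.add_sub_cancel,
    show (2 * m + 1) * (2 * m) / 2 = m + 2 * (m * m) from
      Nat.div_eq_of_eq_mul_left two_pos (by ring),
    pow_add, pow_mul]
  simp

namespace Polynomial

theorem reflect_pow {R : Type*} [CommSemiring R] {p : R[X]} {N : ℕ} (hp : p.natDegree ≤ N)
    (k : ℕ) : reflect (k * N) (p ^ k) = reflect N p ^ k := by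
  induction k with
  | zero => simp [reflect_one]
  | succ k ih =>
    rw [pow_succ, pow_succ, Nat.succ_mul, reflect_mul _ _ (natDegree_pow_le_of_le k hp) hp, ih]

theorem reflect_one_X_sub_C {R : Type*} [CommRing R] {ε : R} (hε : ε * ε = 1) :
    reflect 1 (X - C ε) = C (-ε) * (X - C ε) := by
  have hC : C ε * C ε = (1 : R[X]) := by rw [← C_mul, hε, C_1]
  rw [reflect_sub, reflect_one_X, reflect_C, pow_one, C_neg]
  linear_combination -hC

theorem reflect_X_sub_C_pow {R : Type*} [CommRing R] {ε : R} (hε : ε * ε = 1) (k : ℕ) :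
    reflect k ((X - C ε) ^ k) = C ((-ε) ^ k) * (X - C ε) ^ k := by
  have h := reflect_pow (natDegree_X_sub_C_le ε) k
  rw [mul_one] at h
  rw [h, reflect_one_X_sub_C hε, mul_pow, C_pow]

theorem aeval_reflect_eq_sum {R A : Type*} [CommSemiring R] [Semiring A] [Algebra R A]
    {p : R[X]} {N : ℕ} (hp : p.natDegree ≤ N) (x : A) :
    aeval x (reflect N p) = ∑ k ∈ range (N + 1), p.coeff k • x ^ (N - k) := by
  have hdeg : (reflect N p).natDegree < N + 1 :=
    Nat.lt_succ_of_le (natDegree_reflect_le.trans (max_le le_rfl hp))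
  rw [aeval_eq_sum_range' hdeg, ← sum_range_reflect]
  refine sum_congr rfl fun k hk => ?_
  have hk : k ≤ N := Nat.lt_succ_iff.mp (mem_range.mp hk)
  rw [coeff_reflect, revAt_le (by omega), Nat.add_sub_cancel, Nat.sub_sub_self hk]

end Polynomial

namespace Module.Basis

variable {R M : Type*} [CommRing R] [AddCommGroup M] [Module R M]

theorem det_equiv_self_s11 {ι : Type*} [Fintype ι] [DecidableEq ι] (b : Basis ι R M)
    (σ : Perm ι) :
    LinearMap.det (b.equiv b σ : M →ₗ[R] M) = sign σ := by
  have h := b.det_comp (b.equiv b σ) b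
  have hcomp : (b.equiv b σ : M →ₗ[R] M) ∘ b = b ∘ σ := by ext i; simp
  rw [hcomp, AlternatingMap.map_perm, Module.Basis.det_self] at h
  simpa [Units.smul_def] using h.symm

variable {n : ℕ}

noncomputable def revEquiv (b : Basis (Fin n) R M) : M ≃ₗ[R] M :=
  b.equiv b Fin.revPerm

@[simp]
theorem revEquiv_apply_self (b : Basis (Fin n) R M) (i : Fin n) : b.revEquiv (b i) = b i.rev := by
  simp [revEquiv]

theorem revEquiv_mul_self (b : Basis (Fin n) R M) :
    (b.revEquiv : Module.End R M) * b.revEquiv = 1 :=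
  b.ext fun i => by simp

section Cyclic

variable {f : Module.End R M} {v : M} {b : Basis (Fin (n + 1)) R M}

theorem revEquiv_pow_apply (hb : ∀ i : Fin (n + 1), b i = (f ^ (i : ℕ)) v) {k : ℕ}
    (hk : k ≤ n) :
    b.revEquiv ((f ^ k) v) = (f ^ (n - k)) v := by
  have := b.revEquiv_apply_self ⟨k, Nat.lt_succ_of_le hk⟩
  rwa [hb, hb, Fin.val_rev, Nat.add_sub_add_right] at this

theorem mul_revEquiv_mul_of_sum (hb : ∀ i : Fin (n + 1), b i = (f ^ (i : ℕ)) v) (c : ℕ → R)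
    (hrec : (f ^ (n + 1)) v = ∑ k ∈ range (n + 1), c k • (f ^ k) v)
    (hrev : ∑ k ∈ range (n + 1), c k • (f ^ (n + 1 - k)) v = v) :
    f * b.revEquiv * f = b.revEquiv := by
  refine b.ext fun i => ?_
  simp only [Module.End.mul_apply, LinearEquiv.coe_coe, hb]
  rw [revEquiv_pow_apply hb i.is_le]
  rcases i.is_le.lt_or_eq with hi | hi
  · rw [← Module.End.mul_apply, ← pow_succ', revEquiv_pow_apply hb hi,
      ← Module.End.mul_apply, ← pow_succ']
    congr 2
    omega
  · rw [← Module.End.mul_apply, ← pow_succ', hi, Nat.sub_self, pow_zero, hrec, map_sum,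
      map_sum]
    refine (sum_congr rfl fun k hk => ?_).trans hrev
    have hk : k ≤ n := Nat.lt_succ_iff.mp (mem_range.mp hk)
    rw [map_smul, map_smul, revEquiv_pow_apply hb hk, ← Module.End.mul_apply, ← pow_succ',
      Nat.sub_add_comm hk]

theorem mul_revEquiv_mul_of_aeval (hb : ∀ i : Fin (n + 1), b i = (f ^ (i : ℕ)) v) {p : R[X]}
    (hmonic : p.Monic) (hdeg : p.natDegree = n + 1) (hp : aeval f p = 0)
    (hp' : aeval f (reflect (n + 1) p) = 0) :
    f * b.revEquiv * f = b.revEquiv := by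
  refine mul_revEquiv_mul_of_sum hb (fun k => -p.coeff k) ?_ ?_
  · have h := LinearMap.congr_fun hp v
    rw [hmonic.as_sum, hdeg] at h
    simp only [map_add, map_pow, aeval_X, map_sum, map_mul, aeval_C, Algebra.algebraMap_eq_smul_one,
      Algebra.smul_mul_assoc, one_mul, LinearMap.add_apply, LinearMap.coe_sum, LinearMap.coe_smul,
      Finset.sum_apply, Pi.smul_apply, LinearMap.zero_apply] at h
    simp only [neg_smul, sum_neg_distrib]
    exact eq_neg_of_add_eq_zero_left h
  · have h := LinearMap.congr_fun hp' v
    rw [aeval_reflect_eq_sum hdeg.le, sum_range_succ] at h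
    have hlead : p.coeff (n + 1) = 1 := hdeg ▸ hmonic.coeff_natDegree
    simp only [hlead, Nat.sub_self, pow_zero, one_smul, LinearMap.add_apply, LinearMap.coe_sum,
      LinearMap.coe_smul, Finset.sum_apply, Pi.smul_apply, Module.End.one_apply,
      LinearMap.zero_apply] at h
    simp only [neg_smul, sum_neg_distrib]
    exact neg_eq_of_add_eq_zero_right h

end Cyclic

end Module.Basis

theorem Matrix.exists_involution_mul_mul_eq_self_of_cyclic {K : Type*} [Field K] {n : ℕ}
    {A : Matrix (Fin (n + 1)) (Fin (n + 1)) K} {v : Fin (n + 1) → K}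
    (hv : LinearIndependent K fun i : Fin (n + 1) => (A ^ (i : ℕ)) *ᵥ v)
    (hrev : aeval A (reflect (n + 1) A.charpoly) = 0) :
    ∃ H : Matrix (Fin (n + 1)) (Fin (n + 1)) K,
      H * H = 1 ∧ A * H * A = H ∧ H.det = sign (Fin.revPerm : Perm (Fin (n + 1))) := by
  let f := Matrix.toLinAlgEquiv' A
  let b := basisOfLinearIndependentOfCardEqFinrank hv (by simp)
  have hb : ∀ i, b i = (f ^ (i : ℕ)) v := fun i => by
    simp [b, f, ← map_pow, toLinAlgEquiv'_apply]
  have hfrf : f * b.revEquiv * f = b.revEquiv := by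
    refine b.mul_revEquiv_mul_of_aeval hb A.charpoly_monic (by simp) ?_ ?_
    · rw [aeval_algHom_apply, aeval_self_charpoly, map_zero]
    · rw [aeval_algHom_apply, hrev, map_zero]
  refine ⟨Matrix.toLinAlgEquiv'.symm b.revEquiv, ?_, ?_, ?_⟩
  · rw [← map_mul, b.revEquiv_mul_self, map_one]
  · conv_rhs => rw [← hfrf]
    rw [map_mul, map_mul, AlgEquiv.symm_apply_apply]
  · exact (LinearMap.det_toMatrix' _).trans (b.det_equiv_self_s11 _)

theorem stmt_11_general {F : Type*} [Field F]
    (m : ℕ) (ε : F) (hε : ε = 1 ∨ ε = -1) (g : GL (Fin (2 * m + 1)) F)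
    (hcyc : ∃ v : Fin (2 * m + 1) → F,
      LinearIndependent F (fun i : Fin (2 * m + 1) =>
        (((g : Matrix (Fin (2 * m + 1)) (Fin (2 * m + 1)) F)) ^ (i : ℕ)).mulVec v))
    (hcp : Matrix.charpoly (g : Matrix (Fin (2 * m + 1)) (Fin (2 * m + 1)) F) =
      (Polynomial.X - Polynomial.C ε) ^ (2 * m + 1)) :
    ∃ h h' : GL (Fin (2 * m + 1)) F,
      h ^ 2 = 1 ∧ h' ^ 2 = 1 ∧ h * g * h⁻¹ = g⁻¹ ∧ h' * g * h'⁻¹ = g⁻¹ ∧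
      (h : Matrix (Fin (2 * m + 1)) (Fin (2 * m + 1)) F).det = (-1 : F) ^ m ∧
      (h' : Matrix (Fin (2 * m + 1)) (Fin (2 * m + 1)) F).det = (-1 : F) ^ (m + 1) := by
  have hε2 : ε * ε = 1 := by rcases hε with rfl | rfl <;> norm_num
  obtain ⟨v, hv⟩ := hcyc
  obtain ⟨H, hHH, hgHg, hdet⟩ := Matrix.exists_involution_mul_mul_eq_self_of_cyclic hv (by
    rw [hcp, reflect_X_sub_C_pow hε2, map_mul, ← hcp, aeval_self_charpoly, mul_zero])
  rw [Fin.sign_revPerm_two_mul_add_one] at hdet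
  push_cast at hdet
  let h : GL (Fin (2 * m + 1)) F := ⟨H, H, hHH, hHH⟩
  have hh : h ^ 2 = 1 := Units.ext (by simpa [sq] using hHH)
  have hghg : g * h * g = h := Units.ext hgHg
  refine ⟨h, -h, hh, by rwa [neg_sq], mul_mul_inv_eq_inv_of_sq_eq_one hh hghg,
    mul_mul_inv_eq_inv_of_sq_eq_one (by rwa [neg_sq]) (by rw [mul_neg, neg_mul, hghg]), hdet, ?_⟩
  rw [Units.val_neg, det_neg, Fintype.card_fin, hdet, Odd.neg_one_pow ⟨m, rfl⟩, pow_succ,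
    neg_one_mul, mul_neg_one]

theorem stmt_11 {F : Type*} [Field F] [Fintype F] (hq : Odd (Fintype.card F))
    (m : ℕ) (ε : F) (hε : ε = 1 ∨ ε = -1) (g : GL (Fin (2 * m + 1)) F)
    (hcyc : ∃ v : Fin (2 * m + 1) → F,
      LinearIndependent F (fun i : Fin (2 * m + 1) =>
        (((g : Matrix (Fin (2 * m + 1)) (Fin (2 * m + 1)) F)) ^ (i : ℕ)).mulVec v))
    (hcp : Matrix.charpoly (g : Matrix (Fin (2 * m + 1)) (Fin (2 * m + 1)) F) =
      (Polynomial.X - Polynomial.C ε) ^ (2 * m + 1)) :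
    ∃ h h' : GL (Fin (2 * m + 1)) F,
      h ^ 2 = 1 ∧ h' ^ 2 = 1 ∧ h * g * h⁻¹ = g⁻¹ ∧ h' * g * h'⁻¹ = g⁻¹ ∧
      (h : Matrix (Fin (2 * m + 1)) (Fin (2 * m + 1)) F).det = (-1 : F) ^ m ∧
      (h' : Matrix (Fin (2 * m + 1)) (Fin (2 * m + 1)) F).det = (-1 : F) ^ (m + 1) :=
  stmt_11_general m ε hε g hcyc hcp
end

section
/- Let q ≡ 3 (mod 4). The number of real conjugacy classes of PSL_2(q) is (q+1)/2, and every real class of PSL_2(q) is strongly real. -/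
/-!
Lift `g ∈ PSL₂(q)` to `A ∈ SL₂(q)` with trace `t`. If `t ≠ ±2`, a cyclic vector makes `A`
conjugate to the companion matrix `C` of `X² - tX + 1`, and a trace-zero matrix `h` with
`h² = -1` inverts `C`. Both constructions only need the norm form `u² + tuv + v²` of
`F[X]/(X² - tX + 1)` to represent every element of `F`, which holds over a finite field of odd
order since `t² ≠ 4`. The image of `h` is an involution of `PSL₂(q)` inverting `g`.
If `t = ±2` and `A ≠ ±1`, then `±A` is a transvection, and an element of `SL₂` inverting it
acts on its fixed line by some `λ` with `λ² = -1`; this is impossible for `q ≡ 3 (mod 4)`, so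
the trivial class is the only real class of trace `±2`. Hence the real classes correspond to
the values of `t²`, and there are `(q + 1)/2` squares in `F`.
-/

/-- The projective special linear group `PSL₂(F) = SL₂(F)/Z(SL₂(F))`. -/
abbrev PSL2 (F : Type*) [Field F] :=
  Matrix.SpecialLinearGroup (Fin 2) F ⧸ Subgroup.center (Matrix.SpecialLinearGroup (Fin 2) F)

open Matrix
open scoped MatrixGroups

def IsStronglyReal {G : Type*} [Group G] (g : G) : Prop :=
  ∃ h : G, h ^ 2 = 1 ∧ h * g * h⁻¹ = g⁻¹

namespace IsStronglyReal

variable {G : Type*} [Group G] {g g' : G}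

lemma one : IsStronglyReal (1 : G) := ⟨1, one_pow 2, by simp⟩

lemma isConj_inv (hg : IsStronglyReal g) : IsConj g g⁻¹ :=
  let ⟨h, _, hh⟩ := hg
  isConj_iff.mpr ⟨h, hh⟩

lemma of_isConj (hg : IsStronglyReal g) (hc : IsConj g g') : IsStronglyReal g' := by
  obtain ⟨h, hh, hgh⟩ := hg
  obtain ⟨c, rfl⟩ := isConj_iff.mp hc
  refine ⟨c * h * c⁻¹, by rw [conj_pow, hh, mul_one, mul_inv_cancel], ?_⟩
  calc c * h * c⁻¹ * (c * g * c⁻¹) * (c * h * c⁻¹)⁻¹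
      _ = c * (h * g * h⁻¹) * c⁻¹ := by group
      _ = (c * g * c⁻¹)⁻¹ := by rw [hgh]; group

end IsStronglyReal

theorem Nat.card_range_eq_of_forall_eq_iff {α β γ : Type*} {f : α → β} {e : α → γ}
    (h : ∀ x y, f x = f y ↔ e x = e y) : Nat.card (Set.range f) = Nat.card (Set.range e) :=
  Nat.card_congr <| (Setoid.quotientKerEquivRange f).symm.trans <|
    (Quotient.congrRight h).trans (Setoid.quotientKerEquivRange e)

lemma two_ne_zero_of_not_isSquare_neg_one {R : Type*} [Ring R] (h : ¬IsSquare (-1 : R)) :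
    (2 : R) ≠ 0 :=
  fun h2 => h ⟨1, by
    rw [mul_one]; exact neg_eq_of_add_eq_zero_right (one_add_one_eq_two.trans h2)⟩

namespace FiniteField

variable {F : Type*} [Field F] [Fintype F]

open Finset in
theorem two_mul_card_range_sq (h2 : (2 : F) ≠ 0) :
    2 * Nat.card (Set.range fun x : F => x ^ 2) = Fintype.card F + 1 := by
  classical
  set S := univ.image fun x : F => x ^ 2
  have hfiber : ∀ a ∈ S, #{x | x ^ 2 = a} + (if a = 0 then 1 else 0) = 2 := by
    simp only [S, mem_image, mem_univ, true_and, forall_exists_index]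
    rintro a b rfl
    have : ({x | x ^ 2 = b ^ 2} : Finset F) = {b, -b} := by
      ext x; simp [sq_eq_sq_iff_eq_or_eq_neg]
    rw [this]
    by_cases hb : b = 0
    · simp [hb]
    · rw [card_pair (fun h => hb ?_), if_neg (pow_ne_zero 2 hb)]
      exact (mul_eq_zero.mp (by linear_combination h : (2 : F) * b = 0)).resolve_left h2
  have hcard : Fintype.card F = ∑ a ∈ S, #{x | x ^ 2 = a} := card_eq_sum_card_image _ _
  have h0 : (0 : F) ∈ S := mem_image.mpr ⟨0, mem_univ _, zero_pow two_ne_zero⟩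
  rw [Nat.card_eq_card_toFinset, Set.toFinset_range, hcard, mul_comm, ← smul_eq_mul,
    ← sum_const, ← sum_congr rfl hfiber, sum_add_distrib, sum_ite_eq' S 0, if_pos h0]

open Polynomial in
theorem exists_sq_add_mul_add_sq_eq (hF : Fintype.card F % 2 = 1) {t : F} (ht : t ^ 2 ≠ 4)
    (γ : F) : ∃ u v : F, u ^ 2 + t * u * v + v ^ 2 = γ := by
  obtain ⟨a, b, hab⟩ := exists_root_sum_quadratic (degree_X_pow_sub_C two_pos γ)
    (degree_C_mul_X_pow 2 (sub_ne_zero.mpr (Ne.symm ht) : 4 - t ^ 2 ≠ 0)) hF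
  refine ⟨a - t * b, 2 * b, ?_⟩
  simp only [eval_sub, eval_mul, eval_pow, eval_C, eval_X] at hab
  linear_combination hab

end FiniteField

namespace Matrix.SpecialLinearGroup

section CommRing

variable {n : Type*} [Fintype n] [DecidableEq n] {R : Type*} [CommRing R]

local notation:1024 "↑ₘ" A:1024 => ((A : SpecialLinearGroup n R) : Matrix n n R)

lemma trace_mul_mul_inv (A B : SpecialLinearGroup n R) :
    trace ↑ₘ(B * A * B⁻¹) = trace ↑ₘA := by
  rw [coe_mul, coe_mul, trace_mul_cycle, ← coe_mul, ← coe_mul, inv_mul_cancel, one_mul]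

lemma _root_.IsConj.trace_eq {A B : SpecialLinearGroup n R} (h : IsConj A B) :
    trace ↑ₘA = trace ↑ₘB := by
  obtain ⟨C, rfl⟩ := isConj_iff.mp h
  exact (trace_mul_mul_inv A C).symm

end CommRing

section FinTwo

variable {R : Type*} [CommRing R]

local notation:1024 "↑ₘ" A:1024 => ((A : SL(2, R)) : Matrix (Fin 2) (Fin 2) R)

def companion (t : R) : SL(2, R) := ⟨!![0, -1; 1, t], by simp [det_fin_two_of]⟩

@[simp] lemma coe_companion (t : R) : ↑ₘ(companion t) = !![0, -1; 1, t] := rfl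

@[simp] lemma trace_companion (t : R) : trace ↑ₘ(companion t) = t := by
  simp [trace_fin_two]

@[simp] lemma trace_inv_fin_two (A : SL(2, R)) : trace ↑ₘA⁻¹ = trace ↑ₘA := by
  simp [adjugate_fin_two, trace_fin_two, add_comm]

@[simp] lemma trace_neg_fin_two (A : SL(2, R)) : trace ↑ₘ(-A) = -trace ↑ₘA := by
  rw [coe_neg, Matrix.trace_neg]

end FinTwo

variable {F : Type*} [Field F]

local notation:1024 "↑ₘ" A:1024 => ((A : SL(2, F)) : Matrix (Fin 2) (Fin 2) F)

lemma mem_center_iff_fin_two {A : SL(2, F)} :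
    A ∈ Subgroup.center SL(2, F) ↔ A = 1 ∨ A = -1 := by
  rw [mem_center_iff, Fintype.card_fin]
  constructor
  · rintro ⟨r, hr, hA⟩
    rcases sq_eq_one_iff.mp hr with rfl | rfl
    · exact Or.inl (Subtype.ext (by simp [← hA]))
    · exact Or.inr (Subtype.ext (by simp [← hA, ← diagonal_one]))
  · rintro (rfl | rfl)
    · exact ⟨1, one_pow 2, by simp⟩
    · exact ⟨-1, by norm_num, by simp [← diagonal_one]⟩

lemma exists_det_cyclic_ne_zero {a b c d : F} (hdet : a * d - b * c = 1) (ht : (a + d) ^ 2 ≠ 4) :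
    ∃ x y : F, c * x ^ 2 + (d - a) * x * y - b * y ^ 2 ≠ 0 := by
  by_contra! h
  have hc : c = 0 := by simpa using h 1 0
  have hb : b = 0 := by simpa using h 0 1
  have hda : d - a = 0 := by simpa [hb, hc] using h 1 1
  subst hb hc
  exact ht (by linear_combination (d - a) * hda + 4 * hdet)

/-- The columns of the right factor are `v = (x, y)` and `A v`. -/
lemma mul_cyclic_eq (a b c d x y : F) (hdet : a * d - b * c = 1) :
    !![a, b; c, d] * !![x, a * x + b * y; y, c * x + d * y] =
      !![x, a * x + b * y; y, c * x + d * y] * !![0, -1; 1, a + d] := by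
  simp only [mul_fin_two, EmbeddingLike.apply_eq_iff_eq, vecCons_inj, and_true]
  exact ⟨⟨by ring, by linear_combination (-x) * hdet⟩, by ring,
    by linear_combination (-y) * hdet⟩

theorem isConj_companion [Fintype F] (hF : Fintype.card F % 2 = 1) (A : SL(2, F))
    (hA : trace ↑ₘA ^ 2 ≠ 4) : IsConj (companion (trace ↑ₘA)) A := by
  induction A using fin_two_induction with | h a b c d hdet => ?_
  simp only [trace_fin_two_of] at hA ⊢
  obtain ⟨x, y, hP⟩ := exists_det_cyclic_ne_zero hdet hA
  obtain ⟨u, v, hZ⟩ := FiniteField.exists_sq_add_mul_add_sq_eq hF hA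
    (c * x ^ 2 + (d - a) * x * y - b * y ^ 2)⁻¹
  let P : Matrix (Fin 2) (Fin 2) F := !![x, a * x + b * y; y, c * x + d * y]
  -- `Z = u + v C` commutes with `C` and rescales `det P` to `1`.
  let Z : Matrix (Fin 2) (Fin 2) F := !![u, -v; v, u + (a + d) * v]
  have hPZ : (P * Z).det = 1 := calc
    _ = (c * x ^ 2 + (d - a) * x * y - b * y ^ 2) * (u ^ 2 + (a + d) * u * v + v ^ 2) := by
      simp only [P, Z, det_mul, det_fin_two_of]; ring
    _ = 1 := by rw [hZ, mul_inv_cancel₀ hP]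
  have hZC : Z * !![0, -1; 1, a + d] = !![0, -1; 1, a + d] * Z := by
    simp only [Z, mul_fin_two, EmbeddingLike.apply_eq_iff_eq, vecCons_inj, and_true]
    exact ⟨⟨by ring, by ring⟩, by ring, by ring⟩
  refine isConj_iff.mpr ⟨⟨P * Z, hPZ⟩, mul_inv_eq_of_eq_mul (Subtype.ext ?_)⟩
  show P * Z * !![0, -1; 1, a + d] = !![a, b; c, d] * (P * Z)
  rw [mul_assoc, hZC, ← mul_assoc, ← mul_cyclic_eq a b c d x y hdet, mul_assoc]

theorem exists_mul_self_eq_neg_one_and_conj_companion_eq_inv [Fintype F]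
    (hF : Fintype.card F % 2 = 1) {t : F} (ht : t ^ 2 ≠ 4) :
    ∃ h : SL(2, F), h * h = -1 ∧ h * companion t * h⁻¹ = (companion t)⁻¹ := by
  -- The trace-zero matrices `h` with `tr (h C) = 0` satisfy `h C = C⁻¹ h`; they have
  -- `det h = -(x² + t x z + z²)`.
  obtain ⟨x, z, hxz⟩ := FiniteField.exists_sq_add_mul_add_sq_eq hF ht (-1)
  let h : SL(2, F) := ⟨!![x, x * t + z; z, -x], by rw [det_fin_two_of]; linear_combination -hxz⟩
  refine ⟨h, Subtype.ext ?_, mul_inv_eq_of_eq_mul (Subtype.ext ?_)⟩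
  · show !![x, x * t + z; z, -x] * !![x, x * t + z; z, -x] = -1
    rw [← neg_one_smul F 1, one_fin_two, smul_of, mul_fin_two]
    simp only [smul_cons, smul_empty, EmbeddingLike.apply_eq_iff_eq, vecCons_inj, and_true]
    exact ⟨⟨by linear_combination hxz, by ring⟩, by ring, by linear_combination hxz⟩
  · show !![x, x * t + z; z, -x] * !![0, -1; 1, t] =
      adjugate !![0, -1; 1, t] * !![x, x * t + z; z, -x]
    simp only [adjugate_fin_two_of, mul_fin_two, EmbeddingLike.apply_eq_iff_eq, vecCons_inj,
      and_true]
    exact ⟨⟨by ring, by ring⟩, by ring, by ring⟩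

theorem isSquare_neg_one_of_conj_eq_inv {A B : SL(2, F)} (hA : trace ↑ₘA = 2) (hA1 : A ≠ 1)
    (h : B * A * B⁻¹ = A⁻¹) : IsSquare (-1 : F) := by
  rw [mul_inv_eq_iff_eq_mul] at h
  induction A using fin_two_induction with | h a b c d hdet => ?_
  induction B using fin_two_induction with | h x y z w hdetB => ?_
  have hBA := congrArg Subtype.val h
  change !![x, y; z, w] * !![a, b; c, d] = adjugate !![a, b; c, d] * !![x, y; z, w] at hBA
  simp only [adjugate_fin_two_of, mul_fin_two, EmbeddingLike.apply_eq_iff_eq, vecCons_inj,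
    and_true] at hBA
  obtain ⟨⟨e00, e01⟩, e10, -⟩ := hBA
  simp only [trace_fin_two_of] at hA
  obtain rfl : d = 2 - a := by linear_combination hA
  have hN : (a - 1) ^ 2 + b * c = 0 := by linear_combination -hdet
  have hE : 2 * x * (a - 1) + y * c + b * z = 0 := by linear_combination e00
  by_cases hb : b = 0
  · by_cases hc : c = 0
    · subst hb hc
      obtain rfl : a = 1 := by simpa [sub_eq_zero] using hN
      exact absurd (Subtype.ext (by ext i j; fin_cases i <;> fin_cases j <;> norm_num)) hA1
    have hw : c * (x + w) = 0 := by linear_combination e10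
    obtain rfl : w = -x := by linear_combination (mul_eq_zero.mp hw).resolve_left hc
    -- up to sign, the eigenvalue of `B` on the line `im (A - 1)`, which `B` preserves
    refine ⟨(x * c - (a - 1) * z) / c, ?_⟩
    field_simp
    linear_combination z * c * hE - z ^ 2 * hN + c ^ 2 * hdetB
  · have hw : b * (x + w) = 0 := by linear_combination e01
    obtain rfl : w = -x := by linear_combination (mul_eq_zero.mp hw).resolve_left hb
    refine ⟨(x * b - (a - 1) * y) / b, ?_⟩
    field_simp
    linear_combination y * b * hE - y ^ 2 * hN + b ^ 2 * hdetB

end Matrix.SpecialLinearGroup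

namespace PSL2

open Matrix.SpecialLinearGroup

variable {F : Type*} [Field F]

local notation:1024 "↑ₘ" A:1024 => ((A : SL(2, F)) : Matrix (Fin 2) (Fin 2) F)

def mk : SL(2, F) →* PSL2 F := QuotientGroup.mk' _

lemma mk_surjective : Function.Surjective (mk (F := F)) := QuotientGroup.mk'_surjective _

@[simp] lemma mk_neg (A : SL(2, F)) : mk (-A) = mk A :=
  (QuotientGroup.mk'_eq_mk' _).mpr ⟨-1, mem_center_iff_fin_two.mpr (Or.inr rfl), by simp⟩

lemma isConj_or_isConj_neg_of_isConj_mk {A B : SL(2, F)} (h : IsConj (mk A) (mk B)) :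
    IsConj A B ∨ IsConj A (-B) := by
  obtain ⟨c, hc⟩ := isConj_iff.mp h
  obtain ⟨C, rfl⟩ := mk_surjective c
  rw [← map_inv, ← map_mul, ← map_mul, mk, QuotientGroup.mk'_eq_mk'] at hc
  obtain ⟨z, hz, hCz⟩ := hc
  rcases mem_center_iff_fin_two.mp hz with rfl | rfl
  · exact Or.inl (isConj_iff.mpr ⟨C, by simpa using hCz⟩)
  · exact Or.inr (isConj_iff.mpr ⟨C, by rw [← hCz]; simp⟩)

lemma sq_trace_eq_of_isConj_mk {A B : SL(2, F)} (h : IsConj (mk A) (mk B)) :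
    trace ↑ₘA ^ 2 = trace ↑ₘB ^ 2 := by
  rcases isConj_or_isConj_neg_of_isConj_mk h with h | h <;> simp [h.trace_eq]

theorem mk_eq_one_of_isConj_inv (hns : ¬IsSquare (-1 : F)) (A : SL(2, F))
    (hA : trace ↑ₘA ^ 2 = 4) (h : IsConj (mk A) (mk A)⁻¹) : mk A = 1 := by
  have h2 := two_ne_zero_of_not_isSquare_neg_one hns
  suffices key : ∀ A : SL(2, F), trace ↑ₘA = 2 → IsConj (mk A) (mk A)⁻¹ → A = 1 by
    rcases sq_eq_sq_iff_eq_or_eq_neg.mp (hA.trans (by norm_num : (4 : F) = 2 ^ 2)) with htr | htr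
    · rw [key A htr h, map_one]
    · rw [← mk_neg, key (-A) (by simp [htr]) (by rwa [mk_neg]), map_one]
  intro A hA h
  rw [← map_inv] at h
  rcases isConj_or_isConj_neg_of_isConj_mk h with h | h
  · by_contra hA1
    obtain ⟨B, hB⟩ := isConj_iff.mp h
    exact hns (isSquare_neg_one_of_conj_eq_inv hA hA1 hB)
  · have htr := h.trace_eq
    rw [trace_neg_fin_two, trace_inv_fin_two, hA] at htr
    exact absurd (by linear_combination htr : (2 : F) * 2 = 0) (mul_ne_zero h2 h2)

open scoped Classical in
/-- Representative of the real class attached to `±t`. For `t = ±2` this is `1`: the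
companion matrix would be a non-real transvection. -/
noncomputable def traceRep (t : F) : SL(2, F) := if t ^ 2 = 4 then 1 else companion t

lemma sq_trace_traceRep (t : F) : trace ↑ₘ(traceRep t) ^ 2 = t ^ 2 := by
  unfold traceRep
  split_ifs with ht
  · rw [ht, coe_one, trace_one, Fintype.card_fin]; norm_num
  · rw [trace_companion]

variable [Fintype F]

theorem isStronglyReal_mk_companion (hF : Fintype.card F % 2 = 1) {t : F} (ht : t ^ 2 ≠ 4) :
    IsStronglyReal (mk (companion t)) := by
  obtain ⟨h, hh, hc⟩ := exists_mul_self_eq_neg_one_and_conj_companion_eq_inv hF ht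
  exact ⟨mk h, by rw [sq, ← map_mul, hh, mk_neg, map_one],
    by rw [← map_inv, ← map_mul, ← map_mul, hc, map_inv]⟩

theorem isStronglyReal_mk (hF : Fintype.card F % 2 = 1) (A : SL(2, F))
    (hA : trace ↑ₘA ^ 2 ≠ 4) : IsStronglyReal (mk A) :=
  (isStronglyReal_mk_companion hF hA).of_isConj (mk.map_isConj (isConj_companion hF A hA))

theorem isStronglyReal_of_isConj_inv (hF : Fintype.card F % 2 = 1) (hns : ¬IsSquare (-1 : F))
    (g : PSL2 F) (hg : IsConj g g⁻¹) : IsStronglyReal g := by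
  obtain ⟨A, rfl⟩ := mk_surjective g
  by_cases hA : trace ↑ₘA ^ 2 = 4
  · rw [mk_eq_one_of_isConj_inv hns A hA hg]
    exact IsStronglyReal.one
  · exact isStronglyReal_mk hF A hA

theorem isStronglyReal_mk_traceRep (hF : Fintype.card F % 2 = 1) (t : F) :
    IsStronglyReal (mk (traceRep t)) := by
  unfold traceRep
  split_ifs with ht
  · rw [map_one]; exact IsStronglyReal.one
  · exact isStronglyReal_mk_companion hF ht

theorem isConj_mk_traceRep_neg (hF : Fintype.card F % 2 = 1) (t : F) :
    IsConj (mk (traceRep (-t))) (mk (traceRep t)) := by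
  unfold traceRep
  by_cases ht : t ^ 2 = 4
  · simp [ht]
  · rw [neg_sq, if_neg ht, if_neg ht, ← mk_neg (companion t)]
    have h := isConj_companion hF (-companion t) (by simpa using ht)
    rw [trace_neg_fin_two, trace_companion] at h
    exact mk.map_isConj h

theorem isConj_mk_traceRep_trace (hF : Fintype.card F % 2 = 1) (hns : ¬IsSquare (-1 : F))
    (A : SL(2, F)) (hA : IsConj (mk A) (mk A)⁻¹) :
    IsConj (mk (traceRep (trace ↑ₘA))) (mk A) := by
  unfold traceRep
  split_ifs with ht
  · rw [mk_eq_one_of_isConj_inv hns A ht hA, map_one]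
  · exact mk.map_isConj (isConj_companion hF A ht)

theorem mk_traceRep_eq_iff (hF : Fintype.card F % 2 = 1) (t s : F) :
    ConjClasses.mk (mk (traceRep t)) = ConjClasses.mk (mk (traceRep s)) ↔ t ^ 2 = s ^ 2 := by
  rw [ConjClasses.mk_eq_mk_iff_isConj]
  refine ⟨fun h => by simpa [sq_trace_traceRep] using sq_trace_eq_of_isConj_mk h, fun h => ?_⟩
  rcases sq_eq_sq_iff_eq_or_eq_neg.mp h with rfl | rfl
  · rfl
  · exact isConj_mk_traceRep_neg hF s

theorem range_traceRep (hF : Fintype.card F % 2 = 1) (hns : ¬IsSquare (-1 : F)) :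
    Set.range (fun t => ConjClasses.mk (mk (traceRep t))) =
      {c : ConjClasses (PSL2 F) | ∃ g : PSL2 F, ConjClasses.mk g = c ∧ IsConj g g⁻¹} := by
  ext c
  constructor
  · rintro ⟨t, rfl⟩
    exact ⟨_, rfl, (isStronglyReal_mk_traceRep hF t).isConj_inv⟩
  · rintro ⟨g, rfl, hg⟩
    obtain ⟨A, rfl⟩ := mk_surjective g
    exact ⟨_, ConjClasses.mk_eq_mk_iff_isConj.mpr (isConj_mk_traceRep_trace hF hns A hg)⟩

end PSL2

theorem stmt_18 {F : Type*} [Field F] [Fintype F] (hq : Fintype.card F % 4 = 3) :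
    Nat.card {c : ConjClasses (PSL2 F) | ∃ g : PSL2 F, ConjClasses.mk g = c ∧ IsConj g g⁻¹} =
      (Fintype.card F + 1) / 2 ∧
    ∀ g : PSL2 F, IsConj g g⁻¹ → ∃ h : PSL2 F, h ^ 2 = 1 ∧ h * g * h⁻¹ = g⁻¹ := by
  have hF : Fintype.card F % 2 = 1 := by omega
  have hns : ¬IsSquare (-1 : F) := by simp [FiniteField.isSquare_neg_one_iff, hq]
  refine ⟨?_, PSL2.isStronglyReal_of_isConj_inv hF hns⟩
  rw [← PSL2.range_traceRep hF hns,
    Nat.card_range_eq_of_forall_eq_iff (PSL2.mk_traceRep_eq_iff hF)]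
  have := FiniteField.two_mul_card_range_sq (two_ne_zero_of_not_isSquare_neg_one hns)
  omega
end

section
/- The number of real conjugacy classes of SL_2(q) for q odd is q + 4 if q ≡ 1 (mod 4) and q if q ≡ 3 (mod 4); moreover SL_2(q) (q odd) has exactly 2 strongly real classes, namely the classes of I and -I. -/
/-- The element `-I` of `SL₂(F)`. -/
def negOne (F : Type*) [Field F] : Matrix.SpecialLinearGroup (Fin 2) F :=
  ⟨-1, by simp [Matrix.det_neg]⟩

/-!
An element of `SL₂(q)` with trace `t ≠ ±2` is conjugate to the companion matrix of `X² - tX + 1`: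
the conjugating matrix `(v | g v)` can be given determinant one because a nondegenerate binary
quadratic form over a finite field represents `1`. Since `g⁻¹` has the same trace, the `q - 2`
classes with trace `≠ ±2` are all real. The real classes with trace `tr z = ±2`, `z = ±I`, are
those of `z`, `z [1, 1; 0, 1]` and `z [1, ε; 0, 1]` (`ε` a nonsquare), the last two only when
`-1` is a square, i.e. when `q ≡ 1 mod 4`. The involutions of `SL₂(q)` are
`±I`, which are central, so an element reversed by an involution equals its inverse and is `±I`.
-/

open Matrix MatrixGroups

def realClasses (G : Type*) [Group G] : Set (ConjClasses G) :=
  {c | ∃ g, ConjClasses.mk g = c ∧ IsConj g g⁻¹}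

def stronglyRealClasses (G : Type*) [Group G] : Set (ConjClasses G) :=
  {c | ∃ g, ConjClasses.mk g = c ∧ ∃ h, h ^ 2 = 1 ∧ h * g * h⁻¹ = g⁻¹}

theorem IsConj.inv {G : Type*} [Group G] {a b : G} (h : IsConj a b) : IsConj a⁻¹ b⁻¹ := by
  obtain ⟨c, rfl⟩ := isConj_iff.mp h
  exact isConj_iff.mpr ⟨c, by group⟩

theorem isConj_mul_left_iff_of_mem_center {G : Type*} [Group G] {z : G}
    (hz : z ∈ Subgroup.center G) {a b : G} : IsConj (z * a) (z * b) ↔ IsConj a b := by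
  simp only [isConj_iff]
  refine exists_congr fun c => ?_
  rw [show c * (z * a) * c⁻¹ = z * (c * a * c⁻¹) by
    rw [← mul_assoc, Subgroup.mem_center_iff.mp hz c]; group, mul_right_inj]

theorem sq_eq_one_of_mem_center_of_conj_eq_inv {G : Type*} [Group G] {g h : G}
    (hh : h ∈ Subgroup.center G) (hg : h * g * h⁻¹ = g⁻¹) : g ^ 2 = 1 := by
  rw [← Subgroup.mem_center_iff.mp hh g, mul_inv_cancel_right] at hg
  rw [sq, mul_eq_one_iff_eq_inv]
  exact hg

theorem Set.ncard_eq_sum_ncard_fiber {α β : Type*} [Finite α] [Fintype β] (s : Set α)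
    (f : α → β) : s.ncard = ∑ b, {a ∈ s | f a = b}.ncard := by
  classical
  have := Fintype.ofFinite α
  rw [Set.ncard_eq_toFinset_card', Finset.card_eq_sum_card_fiberwise (f := f) (t := .univ)
    fun _ _ => Finset.mem_univ _]
  refine Finset.sum_congr rfl fun b _ => ?_
  rw [Set.ncard_eq_toFinset_card']
  congr 1
  ext a
  simp

theorem FiniteField.isSquare_mul_of_not_isSquare {F : Type*} [Field F] [Fintype F] {a b : F}
    (ha : ¬IsSquare a) (hb : ¬IsSquare b) : IsSquare (a * b) := by
  classical
  have hab : a * b ≠ 0 := mul_ne_zero (by rintro rfl; exact ha .zero)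
    (by rintro rfl; exact hb .zero)
  rw [← quadraticChar_one_iff_isSquare hab, map_mul,
    quadraticChar_neg_one_iff_not_isSquare.mpr ha, quadraticChar_neg_one_iff_not_isSquare.mpr hb]
  norm_num

open Polynomial in
theorem FiniteField.exists_quadratic_form_eq_one {F : Type*} [Field F] [Fintype F]
    (hF : ringChar F ≠ 2) {a b c : F} (hd : b ^ 2 - 4 * a * c ≠ 0) :
    ∃ x y : F, a * x ^ 2 + b * x * y + c * y ^ 2 = 1 := by
  have h2 : (2 : F) ≠ 0 := Ring.two_ne_zero hF
  have h4 : (4 : F) ≠ 0 := by simpa [show (4 : F) = 2 ^ 2 by norm_num] using h2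
  by_cases ha : a = 0
  · subst ha
    have hb : b ≠ 0 := by rintro rfl; simp at hd
    exact ⟨(1 - c) / b, 1, by field_simp; ring⟩
  have he : c - b ^ 2 / (4 * a) ≠ 0 := fun h => hd (by field_simp at h; linear_combination -h)
  obtain ⟨u, y, huy⟩ := FiniteField.exists_root_sum_quadratic (f := C a * X ^ 2)
    (g := C (c - b ^ 2 / (4 * a)) * X ^ 2 - 1) (by compute_degree!) (by compute_degree!)
    (FiniteField.odd_card_of_char_ne_two hF)
  simp only [eval_mul, eval_pow, eval_C, eval_X, eval_sub, eval_one] at huy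
  -- `a x² + b x y + c y² = a (x + b y / 2a)² + (c - b² / 4a) y²`
  refine ⟨u - b * y / (2 * a), y, ?_⟩
  rw [← sub_eq_zero, ← huy]
  field_simp
  ring

theorem Matrix.of_fin_two_inj {α : Type*} {a b c d a' b' c' d' : α} :
    !![a, b; c, d] = !![a', b'; c', d'] ↔ a = a' ∧ b = b' ∧ c = c' ∧ d = d' := by
  simp [and_assoc]

namespace Matrix.SpecialLinearGroup

variable {n R : Type*} [Fintype n] [DecidableEq n] [CommRing R]

theorem trace_coe_eq_of_isConj {g h : SpecialLinearGroup n R} (hc : IsConj g h) :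
    trace (g : Matrix n n R) = trace (h : Matrix n n R) := by
  obtain ⟨c, rfl⟩ := isConj_iff.mp hc
  rw [coe_mul, coe_mul, trace_mul_cycle, ← coe_mul, inv_mul_cancel, coe_one, one_mul]

def classTrace : ConjClasses (SpecialLinearGroup n R) → R :=
  Quotient.lift (fun g => trace (g : Matrix n n R)) fun _ _ => trace_coe_eq_of_isConj

@[simp]
theorem classTrace_mk (g : SpecialLinearGroup n R) :
    classTrace (ConjClasses.mk g) = trace (g : Matrix n n R) :=
  rfl

end Matrix.SpecialLinearGroup

namespace SL2

open Matrix.SpecialLinearGroup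

variable {F : Type*} [Field F]

local notation:1024 "↑ₘ" A:1024 => ((A : SL(2, F)) : Matrix (Fin 2) (Fin 2) F)

theorem exists_coe_eq_fin_two (g : SL(2, F)) :
    ∃ a b c d : F, ↑ₘg = !![a, b; c, d] ∧ a * d - b * c = 1 :=
  ⟨_, _, _, _, eta_fin_two _, by rw [← det_fin_two, g.2]⟩

theorem isConj_iff_exists_coe_mul_eq {g h : SL(2, F)} :
    IsConj g h ↔ ∃ p : SL(2, F), ↑ₘp * ↑ₘg = ↑ₘh * ↑ₘp :=
  ⟨fun ⟨c, hc⟩ => ⟨c, by simpa [coe_mul] using congr_arg (fun x : SL(2, F) => ↑ₘx) hc⟩,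
    fun ⟨p, hp⟩ => ⟨toUnits p, Subtype.ext hp⟩⟩

def companion (t : F) : SL(2, F) :=
  ⟨!![0, -1; 1, t], by simp [det_fin_two_of]⟩

def unipotent (a : F) : SL(2, F) :=
  ⟨!![1, a; 0, 1], by simp [det_fin_two_of]⟩

@[simp]
theorem coe_companion (t : F) : ↑ₘ(companion t) = !![0, -1; 1, t] :=
  rfl

@[simp]
theorem coe_unipotent (a : F) : ↑ₘ(unipotent a) = !![1, a; 0, 1] :=
  rfl

@[simp]
theorem coe_negOne : ↑ₘ(negOne F) = -1 :=
  rfl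

theorem trace_companion (t : F) : trace ↑ₘ(companion t) = t := by
  simp [trace_fin_two_of]

theorem trace_unipotent (a : F) : trace ↑ₘ(unipotent a) = 2 := by
  norm_num [trace_fin_two_of]

theorem trace_coe_one : trace ↑ₘ(1 : SL(2, F)) = 2 := by
  norm_num [coe_one]

theorem trace_negOne : trace ↑ₘ(negOne F) = -2 := by
  norm_num

theorem trace_coe_inv (g : SL(2, F)) : trace ↑ₘg⁻¹ = trace ↑ₘg := by
  obtain ⟨a, b, c, d, hg, -⟩ := exists_coe_eq_fin_two g
  rw [coe_inv, hg, adjugate_fin_two_of, trace_fin_two_of, trace_fin_two_of, add_comm]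

theorem unipotent_inv (a : F) : (unipotent a)⁻¹ = unipotent (-a) :=
  inv_eq_of_mul_eq_one_right <| Subtype.ext <| by simp [coe_mul, one_fin_two]

theorem unipotent_eq_one_iff {a : F} : unipotent a = 1 ↔ a = 0 := by
  refine ⟨fun h => ?_, fun h => ?_⟩
  · simpa using congr_arg (fun g : SL(2, F) => ↑ₘg 0 1) h
  · ext i j
    fin_cases i <;> fin_cases j <;> simp [h]

theorem negOne_mem_center : negOne F ∈ Subgroup.center SL(2, F) :=
  Subgroup.mem_center_iff.mpr fun g => Subtype.ext (by simp [coe_mul])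

theorem mul_self_eq_one_of_mem_center {z : SL(2, F)} (hz : z ∈ Subgroup.center SL(2, F)) :
    z * z = 1 := by
  obtain ⟨r, hr, hrz⟩ := mem_center_iff.mp hz
  refine Subtype.ext ?_
  rw [coe_mul, ← hrz, coe_one, ← map_mul, ← sq, ← Fintype.card_fin 2, hr, map_one]

theorem trace_mul_eq_trace_iff_of_mem_center {z : SL(2, F)}
    (hz : z ∈ Subgroup.center SL(2, F)) (g : SL(2, F)) :
    trace ↑ₘ(z * g) = trace ↑ₘz ↔ trace ↑ₘg = 2 := by
  obtain ⟨r, hr, hrz⟩ := mem_center_iff.mp hz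
  have hr0 : r ≠ 0 := by rintro rfl; simp at hr
  rw [coe_mul, ← hrz]
  simp only [scalar_apply, diagonal_mul, diagonal_apply_eq, trace_fin_two]
  rw [← mul_add, ← two_mul, mul_comm 2 r, mul_right_inj' hr0]

theorem isConj_inv_mul_iff_of_mem_center {z : SL(2, F)} (hz : z ∈ Subgroup.center SL(2, F))
    (g : SL(2, F)) : IsConj (z * g) (z * g)⁻¹ ↔ IsConj g g⁻¹ := by
  rw [_root_.mul_inv_rev, Subgroup.mem_center_iff.mp (Subgroup.inv_mem _ hz),
    inv_eq_of_mul_eq_one_right (mul_self_eq_one_of_mem_center hz),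
    isConj_mul_left_iff_of_mem_center hz]

theorem eq_one_or_eq_negOne_of_sq_eq_one (hF : ringChar F ≠ 2) {g : SL(2, F)} (hg : g ^ 2 = 1) :
    g = 1 ∨ g = negOne F := by
  obtain ⟨a, b, c, d, hge, hdet⟩ := exists_coe_eq_fin_two g
  have hsq : ↑ₘg * ↑ₘg = 1 := by rw [← coe_mul, ← sq, hg, coe_one]
  rw [hge, mul_fin_two, one_fin_two, of_fin_two_inj] at hsq
  obtain ⟨h00, h01, h10, -⟩ := hsq
  have htr : a + d ≠ 0 := fun h => Ring.two_ne_zero hF (by linear_combination a * h - h00 - hdet)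
  have hb : b = 0 :=
    (mul_eq_zero.mp (by linear_combination h01 : b * (a + d) = 0)).resolve_right htr
  have hc : c = 0 :=
    (mul_eq_zero.mp (by linear_combination h10 : c * (a + d) = 0)).resolve_right htr
  have hd : d = a := by linear_combination a * hdet - d * h00 + c * (a + d) * hb
  have ha : a * a = 1 := by linear_combination h00 - c * hb
  have hg' : ↑ₘg = !![a, 0; 0, a] := by rw [hge, hb, hc, hd]
  rcases mul_self_eq_one_iff.mp ha with rfl | rfl
  · exact Or.inl (Subtype.ext (hg'.trans (one_fin_two).symm))
  · refine Or.inr (Subtype.ext (hg'.trans ?_))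
    simp [one_fin_two]

theorem isConj_companion [Fintype F] (hF : ringChar F ≠ 2) (g : SL(2, F))
    (h2 : trace ↑ₘg ≠ 2) (hm2 : trace ↑ₘg ≠ -2) : IsConj (companion (trace ↑ₘg)) g := by
  obtain ⟨a, b, c, d, hg, hdet⟩ := exists_coe_eq_fin_two g
  rw [hg, trace_fin_two_of] at h2 hm2 ⊢
  -- `P = (v | g v)` conjugates the companion matrix to `g`, and `det P` is a quadratic form
  -- in `v` of discriminant `trace² - 4 ≠ 0`, so it takes the value `1`
  obtain ⟨x, y, hxy⟩ := FiniteField.exists_quadratic_form_eq_one hF (a := c) (b := d - a) (c := -b)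
    (fun h => by
      have : (a + d - 2) * (a + d + 2) = 0 := by linear_combination h + 4 * hdet
      rcases mul_eq_zero.mp this with h | h
      · exact h2 (by linear_combination h)
      · exact hm2 (by linear_combination h))
  refine isConj_iff_exists_coe_mul_eq.mpr
    ⟨⟨!![x, a * x + b * y; y, c * x + d * y], by rw [det_fin_two_of]; linear_combination hxy⟩, ?_⟩
  rw [hg, coe_companion, coe_mk, mul_fin_two, mul_fin_two, of_fin_two_inj]
  exact ⟨by ring, by linear_combination x * hdet, by ring, by linear_combination y * hdet⟩

theorem isConj_unipotent_iff {a b : F} (ha : a ≠ 0) :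
    IsConj (unipotent a) (unipotent b) ↔ ∃ s : F, s ≠ 0 ∧ b = s ^ 2 * a := by
  rw [isConj_iff_exists_coe_mul_eq]
  constructor
  · rintro ⟨P, hP⟩
    obtain ⟨p, q, r, s, hPe, hdet⟩ := exists_coe_eq_fin_two P
    rw [hPe, coe_unipotent, coe_unipotent, mul_fin_two, mul_fin_two, of_fin_two_inj] at hP
    obtain ⟨-, hpq, -, hrs⟩ := hP
    have hr : r = 0 := (mul_eq_zero.mp (by linear_combination hrs : r * a = 0)).resolve_right ha
    have hps : p * s = 1 := by linear_combination hdet + q * hr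
    exact ⟨p, left_ne_zero_of_mul_eq_one hps, by linear_combination -b * hps - p * hpq⟩
  · rintro ⟨s, hs, rfl⟩
    refine ⟨⟨!![s, 0; 0, s⁻¹], by simp [det_fin_two_of, hs]⟩, ?_⟩
    rw [coe_unipotent, coe_unipotent, coe_mk, mul_fin_two, mul_fin_two, of_fin_two_inj]
    exact ⟨by ring, by field_simp; ring, by ring, by ring⟩

theorem exists_isConj_unipotent {g : SL(2, F)} (htr : trace ↑ₘg = 2) (hg : g ≠ 1) :
    ∃ m : F, m ≠ 0 ∧ IsConj (unipotent m) g := by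
  obtain ⟨a, b, c, d, hge, hdet⟩ := exists_coe_eq_fin_two g
  rw [hge, trace_fin_two_of] at htr
  -- `P = ((g - 1) v / m | v)` with `m = det ((g - 1) v | v)`, for `v = e₂` if `b ≠ 0` and
  -- `v = e₁` if `c ≠ 0`; it conjugates `unipotent m` to `g` because `(g - 1)² = 0`
  by_cases hc : c = 0
  · by_cases hb : b = 0
    · refine absurd (Subtype.ext ?_) hg
      have ha : (a - 1) ^ 2 = 0 := by linear_combination a * htr - hdet - b * hc
      replace ha : a = 1 := sub_eq_zero.mp (pow_eq_zero_iff two_ne_zero |>.mp ha)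
      have hd : d = 1 := by linear_combination htr - ha
      show ↑ₘg = 1
      rw [hge, ha, hb, hc, hd, one_fin_two]
    · refine ⟨b, hb, isConj_iff_exists_coe_mul_eq.mpr
        ⟨⟨!![1, 0; (d - 1) / b, 1], by simp [det_fin_two_of]⟩, ?_⟩⟩
      rw [hge, coe_unipotent, coe_mk, mul_fin_two, mul_fin_two, of_fin_two_inj]
      refine ⟨?_, ?_, ?_, ?_⟩ <;> field_simp
      exacts [by linear_combination -htr, by ring, by linear_combination hdet - d * htr, by ring]
  · refine ⟨-c, neg_ne_zero.mpr hc, isConj_iff_exists_coe_mul_eq.mpr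
      ⟨⟨!![(1 - a) / c, 1; -1, 0], by simp [det_fin_two_of]⟩, ?_⟩⟩
    rw [hge, coe_unipotent, coe_mk, mul_fin_two, mul_fin_two, of_fin_two_inj]
    refine ⟨?_, ?_, ?_, ?_⟩ <;> field_simp
    exacts [by linear_combination a * htr - hdet, by ring, by linear_combination htr, by ring]

theorem isConj_unipotent_one_or_isConj_unipotent [Fintype F] {ε m : F} (hε : ¬IsSquare ε)
    (hm : m ≠ 0) : IsConj (unipotent 1) (unipotent m) ∨ IsConj (unipotent ε) (unipotent m) := by
  have hε0 : ε ≠ 0 := by rintro rfl; exact hε .zero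
  by_cases hsq : IsSquare m
  · obtain ⟨s, rfl⟩ := hsq
    exact Or.inl ((isConj_unipotent_iff one_ne_zero).mpr
      ⟨s, fun h => by simp [h] at hm, by ring⟩)
  · obtain ⟨s, hs⟩ := FiniteField.isSquare_mul_of_not_isSquare hsq hε
    refine Or.inr ((isConj_unipotent_iff hε0).mpr
      ⟨s / ε, div_ne_zero (by rintro rfl; simp [hm, hε0] at hs) hε0, ?_⟩)
    field_simp
    linear_combination hs

theorem isConj_inv_of_trace_ne [Fintype F] (hF : ringChar F ≠ 2) {g : SL(2, F)}
    (h2 : trace ↑ₘg ≠ 2) (hm2 : trace ↑ₘg ≠ -2) : IsConj g g⁻¹ := by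
  have hinv := isConj_companion hF g⁻¹ (by rwa [trace_coe_inv]) (by rwa [trace_coe_inv])
  rw [trace_coe_inv] at hinv
  exact (isConj_companion hF g h2 hm2).symm.trans hinv

theorem isConj_inv_unipotent_iff {a : F} (ha : a ≠ 0) :
    IsConj (unipotent a) (unipotent a)⁻¹ ↔ IsSquare (-1 : F) := by
  rw [unipotent_inv, isConj_unipotent_iff ha]
  constructor
  · rintro ⟨s, -, hs⟩
    exact ⟨s, mul_right_cancel₀ ha (by linear_combination hs)⟩
  · rintro ⟨s, hs⟩
    exact ⟨s, fun h => by simp [h] at hs, by linear_combination a * hs⟩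

theorem eq_one_or_isConj_unipotent_of_isConj_inv [Fintype F] {ε : F} (hε : ¬IsSquare ε)
    {g : SL(2, F)} (htr : trace ↑ₘg = 2) (hg : IsConj g g⁻¹) :
    g = 1 ∨ IsSquare (-1 : F) ∧ (IsConj (unipotent 1) g ∨ IsConj (unipotent ε) g) := by
  rcases eq_or_ne g 1 with rfl | hg1
  · exact Or.inl rfl
  obtain ⟨m, hm, hmg⟩ := exists_isConj_unipotent htr hg1
  refine Or.inr ⟨(isConj_inv_unipotent_iff hm).mp (hmg.trans (hg.trans hmg.symm.inv)), ?_⟩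
  exact (isConj_unipotent_one_or_isConj_unipotent hε hm).imp (·.trans hmg) (·.trans hmg)

theorem realClasses_inter_classTrace_eq_of_ne [Fintype F] (hF : ringChar F ≠ 2) {t : F}
    (h2 : t ≠ 2) (hm2 : t ≠ -2) :
    {c ∈ realClasses SL(2, F) | classTrace c = t} = {ConjClasses.mk (companion t)} := by
  ext c
  constructor
  · rintro ⟨⟨g, rfl, -⟩, rfl⟩
    exact ConjClasses.mk_eq_mk_iff_isConj.mpr (isConj_companion hF g h2 hm2).symm
  · rintro rfl
    refine ⟨⟨companion t, rfl, isConj_inv_of_trace_ne hF ?_ ?_⟩, trace_companion t⟩ <;>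
      rwa [trace_companion]

theorem realClasses_inter_classTrace_eq_of_mem_center [Fintype F] {ε : F} (hε : ¬IsSquare ε)
    {z : SL(2, F)} (hz : z ∈ Subgroup.center SL(2, F)) :
    {c ∈ realClasses SL(2, F) | classTrace c = trace ↑ₘz} =
      {c | c = ConjClasses.mk z ∨ IsSquare (-1 : F) ∧
        (c = ConjClasses.mk (z * unipotent 1) ∨ c = ConjClasses.mk (z * unipotent ε))} := by
  have hε0 : ε ≠ 0 := by rintro rfl; exact hε .zero
  ext c
  constructor
  · rintro ⟨⟨g, rfl, hg⟩, htr⟩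
    obtain ⟨u, rfl⟩ : ∃ u, g = z * u := ⟨z⁻¹ * g, by group⟩
    rw [classTrace_mk, trace_mul_eq_trace_iff_of_mem_center hz] at htr
    rw [isConj_inv_mul_iff_of_mem_center hz] at hg
    simp only [Set.mem_ofPred_eq, ConjClasses.mk_eq_mk_iff_isConj, isConj_comm (g := z * u),
      isConj_mul_left_iff_of_mem_center hz]
    rcases eq_one_or_isConj_unipotent_of_isConj_inv hε htr hg with rfl | h
    · exact Or.inl (by rw [mul_one])
    · exact Or.inr h
  · have hreal {a : F} (ha : a ≠ 0) (hsq : IsSquare (-1 : F)) :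
        ConjClasses.mk (z * unipotent a) ∈
          {c ∈ realClasses SL(2, F) | classTrace c = trace ↑ₘz} :=
      ⟨⟨_, rfl, (isConj_inv_mul_iff_of_mem_center hz _).mpr
        ((isConj_inv_unipotent_iff ha).mpr hsq)⟩,
        (trace_mul_eq_trace_iff_of_mem_center hz _).mpr (trace_unipotent a)⟩
    rintro (rfl | ⟨hsq, rfl | rfl⟩)
    · refine ⟨⟨z, rfl, ?_⟩, rfl⟩
      rw [inv_eq_of_mul_eq_one_right (mul_self_eq_one_of_mem_center hz)]
      exact IsConj.refl z
    · exact hreal one_ne_zero hsq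
    · exact hreal hε0 hsq

open scoped Classical in
theorem ncard_realClasses_inter_classTrace_of_mem_center [Fintype F] (hF : ringChar F ≠ 2)
    {z : SL(2, F)} (hz : z ∈ Subgroup.center SL(2, F)) :
    {c ∈ realClasses SL(2, F) | classTrace c = trace ↑ₘz}.ncard =
      if IsSquare (-1 : F) then 3 else 1 := by
  obtain ⟨ε, hε⟩ := FiniteField.exists_nonsquare hF
  have hε0 : ε ≠ 0 := by rintro rfl; exact hε .zero
  have hne {a : F} (ha : a ≠ 0) : ConjClasses.mk z ≠ ConjClasses.mk (z * unipotent a) := by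
    intro h
    have h1 : IsConj (z * 1) (z * unipotent a) := by
      rw [mul_one]
      exact ConjClasses.mk_eq_mk_iff_isConj.mp h
    rw [isConj_mul_left_iff_of_mem_center hz, isConj_one_right, unipotent_eq_one_iff] at h1
    exact ha h1
  rw [realClasses_inter_classTrace_eq_of_mem_center hε hz]
  split_ifs with hsq
  · simp only [hsq, true_and]
    refine Set.ncard_eq_three.mpr ⟨_, _, _, hne one_ne_zero, hne hε0, ?_, rfl⟩
    rw [Ne, ConjClasses.mk_eq_mk_iff_isConj, isConj_mul_left_iff_of_mem_center hz,
      isConj_unipotent_iff one_ne_zero]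
    rintro ⟨s, -, rfl⟩
    exact hε ⟨s, by ring⟩
  · simp only [hsq, false_and, or_false]
    exact Set.ncard_singleton _

open scoped Classical in
theorem ncard_realClasses [Fintype F] (hF : ringChar F ≠ 2) :
    (realClasses SL(2, F)).ncard = Fintype.card F + if IsSquare (-1 : F) then 4 else 0 := by
  have h2 : (2 : F) ≠ -2 := fun h =>
    Ring.two_ne_zero hF ((Ring.eq_self_iff_eq_zero_of_char_ne_two hF).mp h.symm)
  have hone := ncard_realClasses_inter_classTrace_of_mem_center hF (Subgroup.one_mem _)
  have hneg := ncard_realClasses_inter_classTrace_of_mem_center hF negOne_mem_center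
  rw [trace_coe_one] at hone
  rw [trace_negOne] at hneg
  have hrest : ∀ t ∈ (Finset.univ.erase 2).erase (-2),
      {c ∈ realClasses SL(2, F) | classTrace c = t}.ncard = 1 := by
    intro t ht
    obtain ⟨hm2, h2'⟩ : t ≠ -2 ∧ t ≠ 2 := by simpa using ht
    rw [realClasses_inter_classTrace_eq_of_ne hF h2' hm2, Set.ncard_singleton]
  rw [Set.ncard_eq_sum_ncard_fiber _ classTrace, ← Finset.add_sum_erase _ _ (Finset.mem_univ 2),
    ← Finset.add_sum_erase _ _ (Finset.mem_erase.mpr ⟨h2.symm, Finset.mem_univ (-2)⟩), hone, hneg,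
    Finset.sum_congr rfl hrest, Finset.sum_const, smul_eq_mul, mul_one,
    Finset.card_erase_of_mem (Finset.mem_erase.mpr ⟨h2.symm, Finset.mem_univ _⟩),
    Finset.card_erase_of_mem (Finset.mem_univ _), Finset.card_univ]
  have := Fintype.one_lt_card (α := F)
  split_ifs <;> omega

theorem stronglyRealClasses_eq (hF : ringChar F ≠ 2) :
    stronglyRealClasses SL(2, F) = {ConjClasses.mk 1, ConjClasses.mk (negOne F)} := by
  have hcenter {h : SL(2, F)} (hh : h ^ 2 = 1) : h ∈ Subgroup.center SL(2, F) := by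
    rcases eq_one_or_eq_negOne_of_sq_eq_one hF hh with rfl | rfl
    exacts [Subgroup.one_mem _, negOne_mem_center]
  ext c
  constructor
  · rintro ⟨g, rfl, h, hh, hgh⟩
    rcases eq_one_or_eq_negOne_of_sq_eq_one hF
      (sq_eq_one_of_mem_center_of_conj_eq_inv (hcenter hh) hgh) with rfl | rfl
    exacts [Or.inl rfl, Or.inr rfl]
  · rintro (rfl | rfl)
    · exact ⟨1, rfl, 1, one_pow 2, by simp⟩
    · refine ⟨negOne F, rfl, 1, one_pow 2, ?_⟩
      rw [one_mul, inv_one, mul_one,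
        inv_eq_of_mul_eq_one_right (mul_self_eq_one_of_mem_center negOne_mem_center)]

end SL2

theorem stmt_19 {F : Type*} [Field F] [Fintype F] (hq : Odd (Fintype.card F)) :
    (Fintype.card F % 4 = 1 →
      Nat.card {c : ConjClasses (Matrix.SpecialLinearGroup (Fin 2) F) |
          ∃ g, ConjClasses.mk g = c ∧ IsConj g g⁻¹} = Fintype.card F + 4) ∧
    (Fintype.card F % 4 = 3 →
      Nat.card {c : ConjClasses (Matrix.SpecialLinearGroup (Fin 2) F) |
          ∃ g, ConjClasses.mk g = c ∧ IsConj g g⁻¹} = Fintype.card F) ∧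
    {c : ConjClasses (Matrix.SpecialLinearGroup (Fin 2) F) |
        ∃ g, ConjClasses.mk g = c ∧ ∃ h, h ^ 2 = 1 ∧ h * g * h⁻¹ = g⁻¹} =
      {ConjClasses.mk 1, ConjClasses.mk (negOne F)} := by
  have hF : ringChar F ≠ 2 := fun h => by
    have := FiniteField.even_card_of_char_two h
    rw [Nat.odd_iff] at hq
    omega
  have hcard : Nat.card (realClasses SL(2, F)) = _ :=
    (Nat.card_coe_set_eq _).trans (SL2.ncard_realClasses hF)
  refine ⟨fun h4 => ?_, fun h4 => ?_, SL2.stronglyRealClasses_eq hF⟩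
  · exact hcard.trans (by rw [if_pos (FiniteField.isSquare_neg_one_iff.mpr (by omega))])
  · exact hcard.trans (by rw [if_neg (by rw [FiniteField.isSquare_neg_one_iff]; omega), add_zero])
end
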